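/- Consider an HMM with diagonal interactions on ℂ^{d_E} ⊗ ℂ^{d_P}: H_E = Σᵢ hᵢ Eᵢᵢ with hᵢ ∈ ℝ, H_EP = Σᵢ Eᵢᵢ ⊗ Hᵢ with each Hᵢ a Hermitian d_P×d_P matrix, jump operators L_k = Σᵢ Eᵢᵢ ⊗ M_{k,i} for k = 1,…,r, a Hermitian d_P×d_P matrix G, and ω ∈ ℝ. Let ℒ(ρ) = −i[H_EP + ω(I_{d_E} ⊗ G) + ω(H_E ⊗ I_{d_P}), ρ] + Σ_k (L_k ρ L_k† − (1/2){L_k†L_k, ρ}) be the full Lindbladian and ℒ̂(ρ) = −i[H_EP + ω(I_{d_E} ⊗ G), ρ] + Σ_k (L_k ρ L_k† − (1/2){L_k†L_k, ρ}) the Lindbladian with the environment-signal term ω(H_E ⊗ I_{d_P}) omitted. Then for every environment-diagonal matrix ρ = Σᵢ Eᵢᵢ ⊗ Xᵢ (Xᵢ arbitrary d_P×d_P complex matrices) and every t ∈ ℝ: Tr_E(exp(t·ℒ)(ρ)) = Tr_E(exp(t·ℒ̂)(ρ)). -/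

import Mathlib

/-!
Everything in sight is block diagonal with respect to the environment factor: the initial
state, `H_EP`, `I ⊗ G` and the jump operators, hence also every iterate of `ℒ̂` applied to `ρ`.
On such matrices `H_E ⊗ I = diag(hᵢ) ⊗ I` acts on each block as the scalar `hᵢ`, so it commutes
with them and its commutator term in `ℒ` vanishes. Thus `ℒ` and `ℒ̂` agree along the whole orbit
of `ρ`, and the two exponential series coincide term by term, before taking `Tr_E`.
-/

open scoped BigOperators
open Matrix

/-- Kronecker product of two matrices (environment factor first). -/
def kron {n₁ m₁ n₂ m₂ : Type*} (A : Matrix n₁ m₁ ℂ) (B : Matrix n₂ m₂ ℂ) :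
    Matrix (n₁ × n₂) (m₁ × m₂) ℂ :=
  Matrix.of fun p q => A p.1 q.1 * B p.2 q.2

/-- The diagonal matrix unit `Eᵢᵢ = eᵢeᵢ†`. -/
def Eii {dE : ℕ} (i : Fin dE) : Matrix (Fin dE) (Fin dE) ℂ :=
  Matrix.single i i 1

/-- Partial trace over the environment:
`Tr_E(M) = Σᵢ (eᵢ† ⊗ I) M (eᵢ ⊗ I)`. -/
noncomputable def TrE {dE dP : ℕ} (M : Matrix (Fin dE × Fin dP) (Fin dE × Fin dP) ℂ) :
    Matrix (Fin dP) (Fin dP) ℂ :=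
  ∑ i : Fin dE, Matrix.of fun p q => M (i, p) (i, q)

/-- The exponential `exp(L)` of an endomorphism of the matrix space, applied to `ρ`,
via its power series. -/
noncomputable def expApply {dE dP : ℕ}
    (L : Module.End ℂ (Matrix (Fin dE × Fin dP) (Fin dE × Fin dP) ℂ))
    (ρ : Matrix (Fin dE × Fin dP) (Fin dE × Fin dP) ℂ) :
    Matrix (Fin dE × Fin dP) (Fin dE × Fin dP) ℂ :=
  ∑' n : ℕ, ((n.factorial : ℂ)⁻¹) • ((L ^ n) ρ)


theorem Set.EqOn.iterate {α : Type*} {f g : α → α} {s : Set α} (hfg : Set.EqOn f g s)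
    (hg : Set.MapsTo g s s) (n : ℕ) : Set.EqOn f^[n] g^[n] s := by
  induction n with
  | zero => exact fun _ _ => rfl
  | succ n ih =>
    intro x hx
    rw [Function.iterate_succ_apply', Function.iterate_succ_apply', ih hx,
      hfg (hg.iterate n hx)]

section Lindbladian

variable {A : Type*} [Ring A] [StarRing A] [Algebra ℂ A] {σ : Type*} [Fintype σ]

noncomputable def lindbladian (H : A) (L : σ → A) (ρ : A) : A :=
  -Complex.I • (H * ρ - ρ * H) + ∑ k, (L k * ρ * star (L k) -
    ((1 : ℂ) / 2) • (star (L k) * L k * ρ + ρ * (star (L k) * L k)))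

theorem lindbladian_add_of_commute (H : A) {K ρ : A} (L : σ → A) (hK : Commute K ρ) :
    lindbladian (H + K) L ρ = lindbladian H L ρ := by
  simp only [lindbladian, add_mul, mul_add, hK.eq, add_sub_add_right_eq_sub]

theorem lindbladian_mem [StarModule ℂ A] {S : StarSubalgebra ℂ A} {H ρ : A} {L : σ → A}
    (hH : H ∈ S) (hL : ∀ k, L k ∈ S) (hρ : ρ ∈ S) : lindbladian H L ρ ∈ S := by
  have hLL : ∀ k, star (L k) * L k ∈ S := fun k => mul_mem (star_mem (hL k)) (hL k)
  exact add_mem (S.smul_mem (sub_mem (mul_mem hH hρ) (mul_mem hρ hH)) _) <| sum_mem fun k _ =>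
    sub_mem (mul_mem (mul_mem (hL k) hρ) (star_mem (hL k)))
      (S.smul_mem (add_mem (mul_mem (hLL k) hρ) (mul_mem hρ (hLL k))) _)

end Lindbladian

section EnvDiag

variable (ι κ R : Type*) [Fintype ι] [Fintype κ] [DecidableEq ι] [DecidableEq κ]
  [CommSemiring R] [StarRing R]

/-- Block-diagonal matrices for the first factor of `ι × κ` (`Matrix.blockDiagonal` uses the
second). -/
def envDiag : StarSubalgebra R (Matrix (ι × κ) (ι × κ) R) where
  carrier := {M | ∀ i j p q, i ≠ j → M (i, p) (j, q) = 0}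
  mul_mem' {M N} hM hN i j p q hij := by
    rw [mul_apply]
    refine Finset.sum_eq_zero fun ⟨k, s⟩ _ => ?_
    by_cases hk : k = i
    · subst hk; rw [hN _ _ _ _ hij, mul_zero]
    · rw [hM _ _ _ _ (Ne.symm hk), zero_mul]
  add_mem' hM hN i j p q hij := by simp [hM i j p q hij, hN i j p q hij]
  algebraMap_mem' c i j p q hij := by simp [algebraMap_eq_diagonal, hij]
  star_mem' hM i j p q hij := by simp [hM j i q p (Ne.symm hij)]

variable {ι κ}

theorem kron_mem_envDiag {A : Matrix ι ι ℂ} (hA : A.IsDiag) (B : Matrix κ κ ℂ) :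
    kron A B ∈ envDiag ι κ ℂ := fun i j p q hij => by
  simp [kron, hA hij]

theorem commute_kron_diagonal_one (d : ι → ℂ) {M : Matrix (ι × κ) (ι × κ) ℂ}
    (hM : M ∈ envDiag ι κ ℂ) : Commute (kron (diagonal d) (1 : Matrix κ κ ℂ)) M := by
  have hd : kron (diagonal d) (1 : Matrix κ κ ℂ) = diagonal fun ip => d ip.1 := by
    ext ⟨i, p⟩ ⟨j, q⟩
    by_cases hij : i = j <;> by_cases hpq : p = q <;>
      simp [kron, diagonal_apply, one_apply, hij, hpq]
  ext ⟨i, p⟩ ⟨j, q⟩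
  rw [hd, diagonal_mul, mul_diagonal]
  by_cases hij : i = j
  · subst hij; exact mul_comm _ _
  · simp [hM i j p q hij]

end EnvDiag

theorem isDiag_Eii {n : ℕ} (i : Fin n) : (Eii i).IsDiag := fun _ _ hab =>
  single_apply_of_ne _ _ _ _ _ (by rintro ⟨rfl, rfl⟩; exact hab rfl)

theorem expApply_eq_of_eqOn {dE dP : ℕ}
    {L L' : Module.End ℂ (Matrix (Fin dE × Fin dP) (Fin dE × Fin dP) ℂ)}
    {s : Set (Matrix (Fin dE × Fin dP) (Fin dE × Fin dP) ℂ)} (hLL' : Set.EqOn L L' s)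
    (hL' : Set.MapsTo L' s s) {ρ : Matrix (Fin dE × Fin dP) (Fin dE × Fin dP) ℂ} (hρ : ρ ∈ s) :
    expApply L ρ = expApply L' ρ :=
  tsum_congr fun n => by rw [Module.End.pow_apply, Module.End.pow_apply, hLL'.iterate hL' n hρ]

theorem stmt12_general (dE dP : ℕ) (h : Fin dE → ℝ)
    (Hp : Fin dE → Matrix (Fin dP) (Fin dP) ℂ)
    (r : ℕ) (Mk : Fin r → Fin dE → Matrix (Fin dP) (Fin dP) ℂ)
    (G : Matrix (Fin dP) (Fin dP) ℂ) (ω : ℝ)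
    (HE : Matrix (Fin dE) (Fin dE) ℂ) (hHE : HE = Matrix.diagonal fun i => (h i : ℂ))
    (HEP : Matrix (Fin dE × Fin dP) (Fin dE × Fin dP) ℂ)
    (hHEP : HEP = ∑ i, kron (Eii i) (Hp i))
    (Lop : Fin r → Matrix (Fin dE × Fin dP) (Fin dE × Fin dP) ℂ)
    (hLop : ∀ k, Lop k = ∑ i, kron (Eii i) (Mk k i))
    (ℒ : Module.End ℂ (Matrix (Fin dE × Fin dP) (Fin dE × Fin dP) ℂ))
    (hℒ : ∀ ρ, ℒ ρ =
      -(Complex.I) • ((HEP + (ω : ℂ) • kron (1 : Matrix (Fin dE) (Fin dE) ℂ) G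
            + (ω : ℂ) • kron HE (1 : Matrix (Fin dP) (Fin dP) ℂ)) * ρ
          - ρ * (HEP + (ω : ℂ) • kron (1 : Matrix (Fin dE) (Fin dE) ℂ) G
            + (ω : ℂ) • kron HE (1 : Matrix (Fin dP) (Fin dP) ℂ)))
        + ∑ k, (Lop k * ρ * (Lop k)ᴴ
            - ((1 : ℂ)/2) • ((Lop k)ᴴ * Lop k * ρ + ρ * ((Lop k)ᴴ * Lop k))))
    (ℒhat : Module.End ℂ (Matrix (Fin dE × Fin dP) (Fin dE × Fin dP) ℂ))
    (hℒhat : ∀ ρ, ℒhat ρ =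
      -(Complex.I) • ((HEP + (ω : ℂ) • kron (1 : Matrix (Fin dE) (Fin dE) ℂ) G) * ρ
          - ρ * (HEP + (ω : ℂ) • kron (1 : Matrix (Fin dE) (Fin dE) ℂ) G))
        + ∑ k, (Lop k * ρ * (Lop k)ᴴ
            - ((1 : ℂ)/2) • ((Lop k)ᴴ * Lop k * ρ + ρ * ((Lop k)ᴴ * Lop k)))) :
    ∀ (X : Fin dE → Matrix (Fin dP) (Fin dP) ℂ) (t : ℝ),
      TrE (expApply ((t : ℂ) • ℒ) (∑ i, kron (Eii i) (X i)))
        = TrE (expApply ((t : ℂ) • ℒhat) (∑ i, kron (Eii i) (X i))) := by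
  intro X t
  set S := envDiag (Fin dE) (Fin dP) ℂ
  have hℒ' : ∀ ρ, ℒ ρ = lindbladian (HEP + (ω : ℂ) • kron 1 G + (ω : ℂ) • kron HE 1) Lop ρ :=
    hℒ
  have hℒhat' : ∀ ρ, ℒhat ρ = lindbladian (HEP + (ω : ℂ) • kron 1 G) Lop ρ := hℒhat
  have hblock : ∀ Y : Fin dE → Matrix (Fin dP) (Fin dP) ℂ, ∑ i, kron (Eii i) (Y i) ∈ S :=
    fun Y => sum_mem fun i _ => kron_mem_envDiag (isDiag_Eii i) _
  have hH : HEP + (ω : ℂ) • kron 1 G ∈ S :=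
    add_mem (hHEP ▸ hblock Hp) (S.smul_mem (kron_mem_envDiag isDiag_one G) _)
  have hL : ∀ k, Lop k ∈ S := fun k => hLop k ▸ hblock (Mk k)
  have hmaps : Set.MapsTo ⇑((t : ℂ) • ℒhat) S S := fun ρ hρ =>
    S.smul_mem (hℒhat' ρ ▸ lindbladian_mem hH hL hρ) _
  have heq : Set.EqOn ⇑((t : ℂ) • ℒ) ⇑((t : ℂ) • ℒhat) S := fun ρ hρ => by
    have hcomm : Commute ((ω : ℂ) • kron HE 1) ρ :=
      (hHE ▸ commute_kron_diagonal_one _ hρ : Commute (kron HE 1) ρ).smul_left _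
    show (t : ℂ) • ℒ ρ = (t : ℂ) • ℒhat ρ
    rw [hℒ', hℒhat', lindbladian_add_of_commute _ _ hcomm]
  rw [expApply_eq_of_eqOn heq hmaps (hblock X)]

/-- For an HMM with diagonal interactions and an environment-diagonal
initial state `ρ = Σᵢ Eᵢᵢ ⊗ Xᵢ`, the environment-signal term `ω(H_E ⊗ I)` may be dropped:
`Tr_E(exp(tℒ)(ρ)) = Tr_E(exp(tℒ̂)(ρ))` for all `t`. -/
theorem stmt12 (dE dP : ℕ) (h : Fin dE → ℝ)
    (Hp : Fin dE → Matrix (Fin dP) (Fin dP) ℂ) (hHp : ∀ i, (Hp i).IsHermitian)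
    (r : ℕ) (Mk : Fin r → Fin dE → Matrix (Fin dP) (Fin dP) ℂ)
    (G : Matrix (Fin dP) (Fin dP) ℂ) (hG : G.IsHermitian) (ω : ℝ)
    (HE : Matrix (Fin dE) (Fin dE) ℂ) (hHE : HE = Matrix.diagonal fun i => (h i : ℂ))
    (HEP : Matrix (Fin dE × Fin dP) (Fin dE × Fin dP) ℂ)
    (hHEP : HEP = ∑ i, kron (Eii i) (Hp i))
    (Lop : Fin r → Matrix (Fin dE × Fin dP) (Fin dE × Fin dP) ℂ)
    (hLop : ∀ k, Lop k = ∑ i, kron (Eii i) (Mk k i))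
    (ℒ : Module.End ℂ (Matrix (Fin dE × Fin dP) (Fin dE × Fin dP) ℂ))
    (hℒ : ∀ ρ, ℒ ρ =
      -(Complex.I) • ((HEP + (ω : ℂ) • kron (1 : Matrix (Fin dE) (Fin dE) ℂ) G
            + (ω : ℂ) • kron HE (1 : Matrix (Fin dP) (Fin dP) ℂ)) * ρ
          - ρ * (HEP + (ω : ℂ) • kron (1 : Matrix (Fin dE) (Fin dE) ℂ) G
            + (ω : ℂ) • kron HE (1 : Matrix (Fin dP) (Fin dP) ℂ)))
        + ∑ k, (Lop k * ρ * (Lop k)ᴴ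
            - ((1 : ℂ)/2) • ((Lop k)ᴴ * Lop k * ρ + ρ * ((Lop k)ᴴ * Lop k))))
    (ℒhat : Module.End ℂ (Matrix (Fin dE × Fin dP) (Fin dE × Fin dP) ℂ))
    (hℒhat : ∀ ρ, ℒhat ρ =
      -(Complex.I) • ((HEP + (ω : ℂ) • kron (1 : Matrix (Fin dE) (Fin dE) ℂ) G) * ρ
          - ρ * (HEP + (ω : ℂ) • kron (1 : Matrix (Fin dE) (Fin dE) ℂ) G))
        + ∑ k, (Lop k * ρ * (Lop k)ᴴ
            - ((1 : ℂ)/2) • ((Lop k)ᴴ * Lop k * ρ + ρ * ((Lop k)ᴴ * Lop k)))) :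
    ∀ (X : Fin dE → Matrix (Fin dP) (Fin dP) ℂ) (t : ℝ),
      TrE (expApply ((t : ℂ) • ℒ) (∑ i, kron (Eii i) (X i)))
        = TrE (expApply ((t : ℂ) • ℒhat) (∑ i, kron (Eii i) (X i))) :=
  stmt12_general dE dP h Hp r Mk G ω HE hHE HEP hHEP Lop hLop ℒ hℒ ℒhat hℒhat
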